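/- Let u : ℝⁿ → ℝ be a biharmonic function (Δ²u = 0 on ℝⁿ) with subquadratic growth, i.e. sup_{B_r}|u| = o(r²) as r → ∞. Then u is harmonic. -/

import Mathlib

open MeasureTheory Metric Filter
open scoped Topology RealInnerProductSpace ContDiff

/-- The Euclidean Laplacian of `f : ℝⁿ → ℝ`. -/
noncomputable def lap {n : ℕ} (f : EuclideanSpace ℝ (Fin n) → ℝ)
    (x : EuclideanSpace ℝ (Fin n)) : ℝ :=
  ∑ i : Fin n,
    fderiv ℝ (fun y => fderiv ℝ f y (EuclideanSpace.single i 1)) x (EuclideanSpace.single i 1)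

namespace BihAux


/-- profile of the first kernel -/
noncomputable def QQ : ℝ → ℝ := fun q => Real.smoothTransition (1 - q)

lemma QQ_contDiff : ContDiff ℝ ∞ QQ :=
  Real.smoothTransition.contDiff.comp (contDiff_const.sub contDiff_id)

lemma QQ_nonneg (q : ℝ) : 0 ≤ QQ q := Real.smoothTransition.nonneg _

lemma QQ_zero (q : ℝ) (hq : 1 ≤ q) : QQ q = 0 :=
  Real.smoothTransition.zero_of_nonpos (by linarith)

lemma QQ_pos (q : ℝ) (hq : q < 1) : 0 < QQ q :=
  Real.smoothTransition.pos_of_pos (by linarith)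

/-- "half antiderivative" operator -/
noncomputable def antider (W : ℝ → ℝ) : ℝ → ℝ := fun q => (∫ s in q..(1:ℝ), W s) / 2

section antider
variable {W : ℝ → ℝ} (hW : ContDiff ℝ ∞ W)
include hW

lemma antider_hasDerivAt (q : ℝ) : HasDerivAt (antider W) (-(W q) / 2) q := by
  have h1 : HasDerivAt (fun q => ∫ s in (1:ℝ)..q, W s) (W q) q :=
    (hW.continuous.integral_hasStrictDerivAt 1 q).hasDerivAt
  have h2 : (antider W) = fun q => (-(∫ s in (1:ℝ)..q, W s)) / 2 := by
    funext q
    simp [antider, intervalIntegral.integral_symm q 1]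
  rw [h2]
  simpa using (h1.neg).div_const 2

lemma antider_deriv : deriv (antider W) = fun q => -(W q) / 2 := by
  funext q; exact (antider_hasDerivAt hW q).deriv

lemma antider_contDiff : ContDiff ℝ ∞ (antider W) := by
  rw [contDiff_infty_iff_deriv]
  refine ⟨fun q => (antider_hasDerivAt hW q).differentiableAt, ?_⟩
  rw [antider_deriv hW]
  exact (hW.neg).div_const 2

lemma antider_zero_of_one_le (hW0 : ∀ q, 1 ≤ q → W q = 0) (q : ℝ) (hq : 1 ≤ q) :
    antider W q = 0 := by
  have : (∫ s in q..(1:ℝ), W s) = ∫ s in q..(1:ℝ), (0:ℝ) := by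
    apply intervalIntegral.integral_congr
    intro s hs
    rw [Set.uIcc_of_ge hq] at hs
    exact hW0 s hs.1
  simp [antider, this]

lemma antider_nonneg (hW0 : ∀ q, 1 ≤ q → W q = 0) (hWn : ∀ q, 0 ≤ W q) (q : ℝ) :
    0 ≤ antider W q := by
  rcases le_or_gt 1 q with hq | hq
  · rw [antider_zero_of_one_le hW hW0 q hq]
  · have : 0 ≤ ∫ s in q..(1:ℝ), W s :=
      intervalIntegral.integral_nonneg hq.le (fun s _ => hWn s)
    simpa [antider] using by positivity
end antider

lemma antider_QQ_pos : 0 < antider QQ 0 := by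
  have : 0 < ∫ s in (0:ℝ)..1, QQ s := by
    apply intervalIntegral.intervalIntegral_pos_of_pos_on
      (QQ_contDiff.continuous.intervalIntegrable _ _)
    · intro s hs; exact QQ_pos s hs.2
    · norm_num
  simpa [antider] using by positivity

variable {n : ℕ}
local notation "E" => EuclideanSpace ℝ (Fin n)

/-- radial kernel from profile -/
noncomputable def ker (W : ℝ → ℝ) : EuclideanSpace ℝ (Fin n) → ℝ := fun z => W (‖z‖ ^ 2)

lemma ker_contDiff {W : ℝ → ℝ} (hW : ContDiff ℝ ∞ W) : ContDiff ℝ ∞ (ker (n := n) W) :=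
  hW.comp (contDiff_norm_sq ℝ)

lemma ker_zero {W : ℝ → ℝ} (hW0 : ∀ q, 1 ≤ q → W q = 0) (z : E)
    (hz : z ∉ closedBall (0 : E) 1) : ker W z = 0 := by
  apply hW0
  have : 1 < ‖z‖ := by simpa [mem_closedBall, dist_zero_right] using hz
  nlinarith [norm_nonneg z]

lemma ker_compactSupport {W : ℝ → ℝ} (hW0 : ∀ q, 1 ≤ q → W q = 0) :
    HasCompactSupport (ker (n := n) W) := by
  apply HasCompactSupport.intro (isCompact_closedBall (0 : E) 1)
  exact ker_zero hW0

lemma ker_fderiv_apply {W : ℝ → ℝ} (hW : ContDiff ℝ ∞ W) (z : E) (i : Fin n) :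
    fderiv ℝ (ker W) z (EuclideanSpace.single i 1) = deriv W (‖z‖ ^ 2) * (2 * z i) := by
  have hq : HasFDerivAt (fun z : E => ‖z‖ ^ 2) (2 • (innerSL ℝ z)) z :=
    (hasStrictFDerivAt_norm_sq z).hasFDerivAt
  have hWd : HasDerivAt W (deriv W (‖z‖ ^ 2)) (‖z‖ ^ 2) :=
    (hW.differentiable (by norm_num)).differentiableAt.hasDerivAt
  have hcomp : HasFDerivAt (ker (n := n) W)
      ((deriv W (‖z‖ ^ 2)) • (2 • (innerSL ℝ z))) z := hWd.comp_hasFDerivAt z hq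
  rw [hcomp.fderiv]
  simp [innerSL_apply_apply, EuclideanSpace.inner_single_right]

/-- key pointwise identity: `z i * ker W z = - ∂ᵢ (ker (antider W)) z` -/
lemma ker_antider_fderiv {W : ℝ → ℝ} (hW : ContDiff ℝ ∞ W) (z : E) (i : Fin n) :
    z i * ker W z = - fderiv ℝ (ker (antider W)) z (EuclideanSpace.single i 1) := by
  rw [ker_fderiv_apply (antider_contDiff hW) z i, antider_deriv hW]
  simp [ker]
  ring





-- integrability of continuous fns with support in ball
lemma integrable_of_support {f : E → ℝ} (hf : Continuous f)
    (hs : ∀ z, z ∉ closedBall (0 : E) 1 → f z = 0) : Integrable f := by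
  apply hf.integrable_of_hasCompactSupport
  exact HasCompactSupport.intro (isCompact_closedBall (0 : E) 1) hs

lemma ker_integral_pos {W : ℝ → ℝ} (hWc : Continuous W) (hWn : ∀ q, 0 ≤ W q)
    (hW0 : ∀ q, 1 ≤ q → W q = 0) (hWp : 0 < W 0) :
    0 < ∫ z : E, ker W z := by
  have hc : Continuous (ker (n := n) W) := hWc.comp (continuous_norm.pow 2)
  have hint : Integrable (ker (n := n) W) := by
    apply integrable_of_support hc
    intro z hz
    apply hW0
    have : 1 < ‖z‖ := by simpa [mem_closedBall, dist_zero_right] using hz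
    nlinarith [norm_nonneg z]
  refine (integral_pos_iff_support_of_nonneg (fun z => hWn _) hint).2 ?_
  have h0 : (0 : E) ∈ Function.support (ker (n := n) W) := by
    simp [ker, Function.mem_support]
    positivity
  exact (hc.isOpen_support).measure_pos volume ⟨0, h0⟩



/-- integration by parts -/
lemma ibp {f g : E → ℝ} (hf : ContDiff ℝ ∞ f) (hg : ContDiff ℝ ∞ g)
    (hgs : HasCompactSupport g) (v : E) :
    ∫ z : E, f z * fderiv ℝ g z v = - ∫ z : E, fderiv ℝ f z v * g z := by
  have hfc := hf.continuous
  have hgc := hg.continuous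
  have hf' : Continuous (fun z : E => fderiv ℝ f z v) :=
    (hf.continuous_fderiv (by norm_num)).clm_apply continuous_const
  have hg' : Continuous (fun z : E => fderiv ℝ g z v) :=
    (hg.continuous_fderiv (by norm_num)).clm_apply continuous_const
  apply integral_mul_fderiv_eq_neg_fderiv_mul_of_integrable
  · exact (hf'.mul hgc).integrable_of_hasCompactSupport
      (HasCompactSupport.mul_left hgs)
  · exact (hfc.mul hg').integrable_of_hasCompactSupport
      (HasCompactSupport.mul_left (hgs.fderiv_apply ℝ v))
  · exact (hfc.mul hgc).integrable_of_hasCompactSupport (HasCompactSupport.mul_left hgs)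
  · exact fun x _ => hf.differentiable (by norm_num) x
  · exact fun x _ => hg.differentiable (by norm_num) x

/-- differentiating `r ↦ ∫ v (x + r z) κ z dz` under the integral -/
lemma hasDerivAt_conv (v : E → ℝ) (hv : ContDiff ℝ ∞ v) {κ : E → ℝ} (hκ : Continuous κ)
    (hκs : ∀ z, z ∉ closedBall (0 : E) 1 → κ z = 0) (x : E) (r₀ : ℝ) :
    HasDerivAt (fun r : ℝ => ∫ z : E, v (x + r • z) * κ z)
      (∫ z : E, fderiv ℝ v (x + r₀ • z) z * κ z) r₀ := by
  -- bound on the derivative of v over a compact set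
  obtain ⟨M, hM⟩ : ∃ M, ∀ y ∈ closedBall x (|r₀| + 1), ‖fderiv ℝ v y‖ ≤ M :=
    (isCompact_closedBall x (|r₀| + 1)).exists_bound_of_continuousOn
      (hv.continuous_fderiv (by norm_num)).continuousOn
  have hM0 : 0 ≤ M := le_trans (norm_nonneg _) (hM x (mem_closedBall_self (by positivity)))
  have key := hasDerivAt_integral_of_dominated_loc_of_deriv_le (s := ball r₀ 1) (ball_mem_nhds r₀ one_pos)
    (F := fun (r : ℝ) (z : E) => v (x + r • z) * κ z)
    (F' := fun (r : ℝ) (z : E) => fderiv ℝ v (x + r • z) z * κ z)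
    (bound := fun z => M * |κ z|) (μ := volume) (x₀ := r₀)
    ?_ ?_ ?_ ?_ ?_ ?_
  · exact key.2
  · -- measurability of F r
    filter_upwards with r
    exact ((hv.continuous.comp (continuous_const.add (continuous_id.const_smul r))).mul hκ).aestronglyMeasurable
  · -- integrability of F r₀
    apply ((hv.continuous.comp (continuous_const.add (continuous_id.const_smul r₀))).mul hκ).integrable_of_hasCompactSupport
    apply HasCompactSupport.intro (isCompact_closedBall (0 : E) 1)
    intro z hz; simp [hκs z hz]
  · -- measurability of F' r₀
    have : Continuous fun z : E => fderiv ℝ v (x + r₀ • z) z := by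
      apply Continuous.clm_apply _ continuous_id
      exact (hv.continuous_fderiv (by norm_num)).comp (continuous_const.add (continuous_id.const_smul r₀))
    exact (this.mul hκ).aestronglyMeasurable
  · -- bound
    filter_upwards with z
    intro r hr
    by_cases hz : z ∈ closedBall (0 : E) 1
    · have hz1 : ‖z‖ ≤ 1 := by simpa [mem_closedBall, dist_zero_right] using hz
      have hy : x + r • z ∈ closedBall x (|r₀| + 1) := by
        simp only [mem_closedBall, dist_eq_norm]
        have : ‖x + r • z - x‖ = ‖r • z‖ := by congr 1; abel
        rw [this, norm_smul]
        have hrr : |r| < |r₀| + 1 := by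
          have := abs_sub_abs_le_abs_sub r r₀
          have hr' : |r - r₀| < 1 := by simpa [Real.dist_eq] using hr
          linarith
        calc |r| * ‖z‖ ≤ |r| * 1 := by
              apply mul_le_mul_of_nonneg_left hz1 (abs_nonneg r)
          _ ≤ |r₀| + 1 := by rw [mul_one]; exact hrr.le
      have hop : ‖fderiv ℝ v (x + r • z) z‖ ≤ ‖fderiv ℝ v (x + r • z)‖ * ‖z‖ :=
        (fderiv ℝ v (x + r • z)).le_opNorm z
      have hM' : ‖fderiv ℝ v (x + r • z)‖ ≤ M := hM _ hy
      calc ‖fderiv ℝ v (x + r • z) z * κ z‖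
          = ‖fderiv ℝ v (x + r • z) z‖ * |κ z| := by rw [norm_mul, Real.norm_eq_abs, Real.norm_eq_abs]
        _ ≤ (M * 1) * |κ z| := by
            apply mul_le_mul_of_nonneg_right _ (abs_nonneg _)
            refine hop.trans ?_
            have h1 : (0:ℝ) ≤ ‖z‖ := norm_nonneg z
            nlinarith [norm_nonneg (fderiv ℝ v (x + r • z))]
        _ = M * |κ z| := by ring
    · simp [hκs z hz, hM0]
  · -- integrability of bound
    apply Continuous.integrable_of_hasCompactSupport (by fun_prop)
    apply HasCompactSupport.intro (isCompact_closedBall (0 : E) 1)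
    intro z hz; simp [hκs z hz]
  · -- differentiability in r
    filter_upwards with z
    intro r hr
    have h1 : HasDerivAt (fun r : ℝ => x + r • z) z r := by
      simpa using ((hasDerivAt_id r).smul_const z).const_add x
    have h2 : HasDerivAt (fun r : ℝ => v (x + r • z)) (fderiv ℝ v (x + r • z) z) r :=
      (((hv.differentiable (by norm_num)) _).hasFDerivAt).comp_hasDerivAt r h1
    exact h2.mul_const (κ z)

/-- directional partial derivative -/
noncomputable def Dp (i : Fin n) (f : EuclideanSpace ℝ (Fin n) → ℝ) :
    EuclideanSpace ℝ (Fin n) → ℝ :=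
  fun z => fderiv ℝ f z (EuclideanSpace.single i 1)

lemma lap_eq (f : E → ℝ) : lap f = fun x => ∑ i, Dp i (Dp i f) x := rfl

lemma Dp_contDiff {f : E → ℝ} (hf : ContDiff ℝ ∞ f) (i : Fin n) : ContDiff ℝ ∞ (Dp i f) := by
  have h : ContDiff ℝ ∞ (fderiv ℝ f) := hf.fderiv_right (by norm_num)
  exact h.clm_apply contDiff_const

lemma lap_contDiff {f : E → ℝ} (hf : ContDiff ℝ ∞ f) : ContDiff ℝ ∞ (lap f) := by
  rw [lap_eq]
  exact ContDiff.sum fun i _ => Dp_contDiff (Dp_contDiff hf i) i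

lemma affine_contDiff (x : E) (r : ℝ) : ContDiff ℝ ∞ (fun z : E => x + r • z) :=
  contDiff_const.add (contDiff_id.const_smul r)

lemma fderiv_affine {f : E → ℝ} (hf : Differentiable ℝ f) (x : E) (r : ℝ) (z w : E) :
    fderiv ℝ (fun z => f (x + r • z)) z w = r * fderiv ℝ f (x + r • z) w := by
  have hA : HasFDerivAt (fun z : E => x + r • z)
      (r • ContinuousLinearMap.id ℝ (EuclideanSpace ℝ (Fin n))) z :=
    ((hasFDerivAt_id z).const_smul r).const_add x
  have hcomp := ((hf _).hasFDerivAt.comp z hA)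
  have : fderiv ℝ (fun z => f (x + r • z)) z =
      (fderiv ℝ f (x + r • z)).comp (r • ContinuousLinearMap.id ℝ (EuclideanSpace ℝ (Fin n))) :=
    HasFDerivAt.fderiv hcomp
  rw [this]
  simp [ContinuousLinearMap.comp_apply]

lemma clm_apply_sum (L : EuclideanSpace ℝ (Fin n) →L[ℝ] ℝ) (z : E) :
    L z = ∑ i, z i * L (EuclideanSpace.single i 1) := by
  have hz : z = ∑ i, z i • (EuclideanSpace.single i 1 : E) := by
    have := (EuclideanSpace.basisFun (Fin n) ℝ).sum_repr z
    simp only [EuclideanSpace.basisFun_repr, EuclideanSpace.basisFun_apply] at this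
    exact this.symm
  conv_lhs => rw [hz]
  rw [map_sum]
  simp [smul_eq_mul]


/-- The key integration-by-parts step. -/
lemma step {v : E → ℝ} (hv : ContDiff ℝ ∞ v) {W : ℝ → ℝ} (hW : ContDiff ℝ ∞ W)
    (hW0 : ∀ q, 1 ≤ q → W q = 0) (x : E) (r : ℝ) :
    ∫ z : E, fderiv ℝ v (x + r • z) z * ker W z
      = r * ∫ z : E, lap v (x + r • z) * ker (antider W) z := by
  have hψ : ContDiff ℝ ∞ (ker (n := n) (antider W)) := ker_contDiff (antider_contDiff hW)
  have hψs : HasCompactSupport (ker (n := n) (antider W)) :=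
    ker_compactSupport (antider_zero_of_one_le hW hW0)
  have hκc : Continuous (ker (n := n) W) := (ker_contDiff hW).continuous
  set F : Fin n → E → ℝ := fun i z => Dp i v (x + r • z) with hF
  have hFc : ∀ i, ContDiff ℝ ∞ (F i) := fun i => (Dp_contDiff hv i).comp (affine_contDiff x r)
  have hint : ∀ i : Fin n, Integrable (fun z : E => F i z * (z i * ker W z)) := by
    intro i
    apply integrable_of_support
    · exact (hFc i).continuous.mul ((by fun_prop : Continuous fun z : E => z i).mul hκc)
    · intro z hz; rw [ker_zero hW0 z hz]; ring
  have hint2 : ∀ i : Fin n,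
      Integrable (fun z : E => (r * Dp i (Dp i v) (x + r • z)) * ker (antider W) z) := by
    intro i
    apply ((continuous_const.mul
      (((Dp_contDiff (Dp_contDiff hv i) i).continuous).comp
        (affine_contDiff x r).continuous)).mul
        hψ.continuous).integrable_of_hasCompactSupport
    exact HasCompactSupport.mul_left hψs
  have key1 : ∀ z : E, fderiv ℝ v (x + r • z) z * ker W z
      = ∑ i, F i z * (z i * ker W z) := by
    intro z
    rw [clm_apply_sum (fderiv ℝ v (x + r • z)) z, Finset.sum_mul]
    exact Finset.sum_congr rfl fun i _ => by simp only [hF, Dp]; ring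
  calc ∫ z : E, fderiv ℝ v (x + r • z) z * ker W z
      = ∫ z : E, ∑ i, F i z * (z i * ker W z) := by simp_rw [key1]
    _ = ∑ i, ∫ z : E, F i z * (z i * ker W z) := integral_finset_sum _ (fun i _ => hint i)
    _ = ∑ i, ∫ z : E, (r * Dp i (Dp i v) (x + r • z)) * ker (antider W) z := by
        refine Finset.sum_congr rfl fun i _ => ?_
        have e1 : (fun z : E => F i z * (z i * ker W z))
            = fun z : E => -(F i z * Dp i (ker (antider W)) z) := by
          funext z
          rw [ker_antider_fderiv hW z i]
          simp only [Dp]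
          ring
        rw [e1, integral_neg]
        simp only [Dp]
        rw [ibp (hFc i) hψ hψs (EuclideanSpace.single i 1), neg_neg]
        congr 1
        funext z
        congr 1
        exact fderiv_affine ((Dp_contDiff hv i).differentiable (by norm_num)) x r z _
    _ = ∫ z : E, ∑ i, (r * Dp i (Dp i v) (x + r • z)) * ker (antider W) z :=
        (integral_finset_sum _ (fun i _ => hint2 i)).symm
    _ = r * ∫ z : E, lap v (x + r • z) * ker (antider W) z := by
        rw [← integral_const_mul]
        congr 1
        funext z
        simp only [lap_eq, Finset.sum_mul, Finset.mul_sum]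
        exact Finset.sum_congr rfl fun i _ => by ring


lemma le_sup_ball {u : E → ℝ} (hu : Continuous u) {R : ℝ} {y : E}
    (hy : y ∈ ball (0 : E) R) :
    |u y| ≤ ⨆ x ∈ ball (0 : E) R, |u x| := by
  obtain ⟨C, hC⟩ := (isCompact_closedBall (0 : E) R).exists_bound_of_continuousOn hu.continuousOn
  have bdd : BddAbove (Set.range fun x : E => ⨆ _ : x ∈ ball (0 : E) R, |u x|) := by
    refine ⟨max C 0, ?_⟩
    rintro t ⟨w, rfl⟩
    dsimp only
    by_cases hw : w ∈ ball (0 : E) R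
    · haveI : Nonempty (w ∈ ball (0 : E) R) := ⟨hw⟩
      rw [ciSup_const]
      exact le_max_of_le_left (by simpa using hC w (ball_subset_closedBall hw))
    · haveI : IsEmpty (w ∈ ball (0 : E) R) := ⟨hw⟩
      rw [Real.iSup_of_isEmpty]
      exact le_max_right _ _
  haveI : Nonempty (y ∈ ball (0 : E) R) := ⟨hy⟩
  calc |u y| = ⨆ _ : y ∈ ball (0 : E) R, |u y| := ciSup_const.symm
    _ ≤ ⨆ x ∈ ball (0 : E) R, |u x| := le_ciSup bdd y

end BihAux
open Asymptotics in
/-- Biharmonic Liouville theorem: subquadratic growth implies harmonic. -/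
theorem biharmonic_subquadratic_is_harmonic (n : ℕ)
    (u : EuclideanSpace ℝ (Fin n) → ℝ) (hu : ContDiff ℝ (⊤ : ℕ∞) u)
    (hbi : ∀ x, lap (lap u) x = 0)
    (hgrowth :
      (fun r : ℝ => ⨆ x ∈ ball (0 : EuclideanSpace ℝ (Fin n)) r, |u x|) =o[atTop]
        (fun r : ℝ => r ^ 2)) :
    ∀ x, lap u x = 0 := by
  classical
  intro x
  have hu' : ContDiff ℝ ∞ u := hu.of_le (mod_cast le_top)
  have hQ := BihAux.QQ_contDiff
  have hP1 : ContDiff ℝ ∞ (BihAux.antider BihAux.QQ) := BihAux.antider_contDiff hQ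
  have hP1zero : ∀ q, 1 ≤ q → BihAux.antider BihAux.QQ q = 0 :=
    BihAux.antider_zero_of_one_le hQ BihAux.QQ_zero
  have hP1nonneg : ∀ q, 0 ≤ BihAux.antider BihAux.QQ q :=
    BihAux.antider_nonneg hQ BihAux.QQ_zero BihAux.QQ_nonneg
  set S : ℝ → ℝ := fun r => ⨆ x ∈ ball (0 : EuclideanSpace ℝ (Fin n)) r, |u x| with hS_def
  set c : ℝ := ∫ z : EuclideanSpace ℝ (Fin n), BihAux.ker (BihAux.antider BihAux.QQ) z with hc_def
  have hc : 0 < c :=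
    BihAux.ker_integral_pos hP1.continuous hP1nonneg hP1zero BihAux.antider_QQ_pos
  set K : ℝ := lap u x with hK_def
  set g : ℝ → ℝ := fun r => ∫ z : EuclideanSpace ℝ (Fin n),
    u (x + r • z) * BihAux.ker BihAux.QQ z with hg_def
  set h : ℝ → ℝ := fun r => ∫ z : EuclideanSpace ℝ (Fin n),
    lap u (x + r • z) * BihAux.ker (BihAux.antider BihAux.QQ) z with hh_def
  have hlapu : ContDiff ℝ ∞ (lap u) := BihAux.lap_contDiff hu'
  have hg' : ∀ r, HasDerivAt g (r * h r) r := by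
    intro r
    have H := BihAux.hasDerivAt_conv u hu' (BihAux.ker_contDiff hQ).continuous
      (BihAux.ker_zero BihAux.QQ_zero) x r
    rwa [BihAux.step hu' hQ BihAux.QQ_zero x r] at H
  have hh' : ∀ r, HasDerivAt h 0 r := by
    intro r
    have H := BihAux.hasDerivAt_conv (lap u) hlapu (BihAux.ker_contDiff hP1).continuous
      (BihAux.ker_zero hP1zero) x r
    rw [BihAux.step hlapu hP1 hP1zero x r] at H
    have hz : (∫ z : EuclideanSpace ℝ (Fin n), lap (lap u) (x + r • z) *
        BihAux.ker (BihAux.antider (BihAux.antider BihAux.QQ)) z) = 0 := by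
      simp [hbi]
    rwa [hz, mul_zero] at H
  have hhconst : ∀ r, h r = h 0 := fun r =>
    is_const_of_deriv_eq_zero (fun s => (hh' s).differentiableAt)
      (fun s => (hh' s).deriv) r 0
  have hh0 : h 0 = K * c := by
    have h1 : h 0 = ∫ z : EuclideanSpace ℝ (Fin n),
        lap u x * BihAux.ker (BihAux.antider BihAux.QQ) z := by
      rw [hh_def]; simp
    rw [h1, MeasureTheory.integral_const_mul, hK_def, hc_def]
  have hgid : ∀ r, g r - K * c / 2 * r ^ 2 = g 0 := by
    have hd : ∀ r, HasDerivAt (fun r => g r - K * c / 2 * r ^ 2) 0 r := by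
      intro r
      have h2 : HasDerivAt (fun r : ℝ => K * c / 2 * r ^ 2) (K * c / 2 * (2 * r)) r := by
        have := (hasDerivAt_pow 2 r).const_mul (K * c / 2)
        simpa using this
      have h3 := (hg' r).sub h2
      have e : r * h r - K * c / 2 * (2 * r) = 0 := by
        rw [hhconst r, hh0]; ring
      rwa [e] at h3
    intro r
    have := is_const_of_deriv_eq_zero (fun s => (hd s).differentiableAt)
      (fun s => (hd s).deriv) r 0
    simpa using this
  set Cφ : ℝ := ∫ z : EuclideanSpace ℝ (Fin n), BihAux.ker BihAux.QQ z with hCφ_def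
  have hCφnn : 0 ≤ Cφ := by
    rw [hCφ_def]
    exact MeasureTheory.integral_nonneg fun z => BihAux.QQ_nonneg _
  have hbound : ∀ r : ℝ, 0 ≤ r → |g r| ≤ S (‖x‖ + r + 1) * Cφ := by
    intro r hr
    have hptwise : ∀ z : EuclideanSpace ℝ (Fin n),
        ‖u (x + r • z) * BihAux.ker BihAux.QQ z‖
          ≤ S (‖x‖ + r + 1) * BihAux.ker BihAux.QQ z := by
      intro z
      by_cases hz : z ∈ closedBall (0 : EuclideanSpace ℝ (Fin n)) 1
      · have hz1 : ‖z‖ ≤ 1 := by rwa [mem_closedBall, dist_zero_right] at hz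
        have hmem : x + r • z ∈ ball (0 : EuclideanSpace ℝ (Fin n)) (‖x‖ + r + 1) := by
          rw [mem_ball, dist_zero_right]
          calc ‖x + r • z‖ ≤ ‖x‖ + ‖r • z‖ := norm_add_le _ _
            _ = ‖x‖ + |r| * ‖z‖ := by rw [norm_smul]; rfl
            _ ≤ ‖x‖ + r * 1 := by
                rw [abs_of_nonneg hr]
                have := mul_le_mul_of_nonneg_left hz1 hr
                linarith
            _ < ‖x‖ + r + 1 := by linarith
        have h1 : |u (x + r • z)| ≤ S (‖x‖ + r + 1) :=
          BihAux.le_sup_ball hu'.continuous hmem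
        have h2 : 0 ≤ BihAux.ker (n := n) BihAux.QQ z := BihAux.QQ_nonneg _
        rw [norm_mul, Real.norm_eq_abs, Real.norm_eq_abs, abs_of_nonneg h2]
        exact mul_le_mul_of_nonneg_right h1 h2
      · rw [BihAux.ker_zero BihAux.QQ_zero z hz]
        simp
    have hint : MeasureTheory.Integrable (fun z : EuclideanSpace ℝ (Fin n) =>
        S (‖x‖ + r + 1) * BihAux.ker BihAux.QQ z) := by
      apply BihAux.integrable_of_support
      · exact continuous_const.mul (BihAux.ker_contDiff hQ).continuous
      · intro z hz; rw [BihAux.ker_zero BihAux.QQ_zero z hz, mul_zero]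
    have hkey := MeasureTheory.norm_integral_le_of_norm_le hint
      (Filter.Eventually.of_forall hptwise)
    rw [MeasureTheory.integral_const_mul] at hkey
    rw [hCφ_def, hg_def]
    simpa using hkey
  -- asymptotics
  have hm : Filter.Tendsto (fun r : ℝ => ‖x‖ + r + 1) atTop atTop := by
    apply Filter.tendsto_atTop_add_const_right
    exact Filter.tendsto_atTop_add_const_left _ _ Filter.tendsto_id
  have hcomp : (fun r : ℝ => S (‖x‖ + r + 1)) =o[atTop]
      fun r : ℝ => (‖x‖ + r + 1) ^ 2 := by
    simpa [Function.comp_def] using hgrowth.comp_tendsto hm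
  have hbig : (fun r : ℝ => (‖x‖ + r + 1) ^ 2) =O[atTop] fun r : ℝ => r ^ 2 := by
    apply IsBigO.of_bound 4
    filter_upwards [Filter.eventually_ge_atTop (max 1 (‖x‖ + 1))] with r hr
    have h1 : (1:ℝ) ≤ r := le_trans (le_max_left _ _) hr
    have h2 : ‖x‖ + 1 ≤ r := le_trans (le_max_right _ _) hr
    rw [Real.norm_eq_abs, Real.norm_eq_abs,
      abs_of_nonneg (by positivity : (0:ℝ) ≤ (‖x‖ + r + 1) ^ 2),
      abs_of_nonneg (by positivity : (0:ℝ) ≤ r ^ 2)]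
    nlinarith [norm_nonneg x]
  have hSo : (fun r : ℝ => S (‖x‖ + r + 1)) =o[atTop] fun r : ℝ => r ^ 2 :=
    hcomp.trans_isBigO hbig
  have hgO : g =O[atTop] fun r : ℝ => S (‖x‖ + r + 1) := by
    apply IsBigO.of_bound Cφ
    filter_upwards [Filter.eventually_ge_atTop (0:ℝ)] with r hr
    have hb := hbound r hr
    have hle := le_abs_self (S (‖x‖ + r + 1))
    rw [Real.norm_eq_abs, Real.norm_eq_abs]
    nlinarith [abs_nonneg (S (‖x‖ + r + 1))]
  have hgo : g =o[atTop] fun r : ℝ => r ^ 2 := hgO.trans_isLittleO hSo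
  have hconsto : (fun _ : ℝ => g 0) =o[atTop] fun r : ℝ => r ^ 2 := by
    rw [isLittleO_const_left]
    right
    have hp : Filter.Tendsto (fun r : ℝ => r ^ 2) atTop atTop := tendsto_pow_atTop two_ne_zero
    exact tendsto_norm_atTop_atTop.comp hp
  have hfinal : (fun r : ℝ => K * c / 2 * r ^ 2) =o[atTop] fun r : ℝ => r ^ 2 := by
    have he : (fun r : ℝ => K * c / 2 * r ^ 2) = fun r => g r - g 0 := by
      funext r
      have := hgid r
      linarith
    rw [he]
    exact hgo.sub hconsto
  by_contra hK0
  have hβ : K * c / 2 ≠ 0 := by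
    apply div_ne_zero _ two_ne_zero
    exact mul_ne_zero hK0 hc.ne'
  obtain ⟨r, hr1, hr2⟩ := ((hfinal.def (show (0:ℝ) < |K * c / 2| / 2 by positivity)).and
    (Filter.eventually_ge_atTop (1:ℝ))).exists
  rw [Real.norm_eq_abs, Real.norm_eq_abs, abs_mul] at hr1
  have hrr : (0:ℝ) < r ^ 2 := by nlinarith
  rw [abs_of_pos hrr] at hr1
  have hβpos : 0 < |K * c / 2| := abs_pos.2 hβ
  nlinarith
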